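/- Let {E_j} be a family of pairwise essentially disjoint integer translates of the chiral molecules R and S whose union contains the square Q_{2k}(n) of side 2k ≥ 8 centered at n ∈ ℤ². Then there exists i ∈ {1,...,8} such that every molecule E_j intersecting the concentric square Q_{2k-4}(n) belongs to the modulated phase 𝒵_i. -/

import Mathlib

open MeasureTheory Set Filter
open scoped ENNReal

noncomputable section

/-- The basic R-shaped chiral molecule. -/
def Rbase : Set (ℝ × ℝ) := (Icc (0:ℝ) 1 ×ˢ Icc (0:ℝ) 3) ∪ (Icc (1:ℝ) 2 ×ˢ Icc (2:ℝ) 3)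

/-- The basic S-shaped (mirror) chiral molecule. -/
def Sbase : Set (ℝ × ℝ) := (Icc (-1:ℝ) 0 ×ˢ Icc (0:ℝ) 3) ∪ (Icc (-2:ℝ) (-1) ×ˢ Icc (2:ℝ) 3)

/-- Translation of a subset of the plane by a vector. -/
def trSet (v : ℝ × ℝ) (A : Set (ℝ × ℝ)) : Set (ℝ × ℝ) :=
  (fun x => (v.1 + x.1, v.2 + x.2)) '' A

/-- Integer translate of the R molecule. -/
def Rmol (n : ℤ × ℤ) : Set (ℝ × ℝ) := trSet ((n.1 : ℝ), (n.2 : ℝ)) Rbase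

/-- Integer translate of the S molecule. -/
def Smol (n : ℤ × ℤ) : Set (ℝ × ℝ) := trSet ((n.1 : ℝ), (n.2 : ℝ)) Sbase

/-- A set is a molecule if it is an integer translate of R or of S. -/
def IsMolecule (E : Set (ℝ × ℝ)) : Prop := ∃ n : ℤ × ℤ, E = Rmol n ∨ E = Smol n

/-- A chiral family: molecules with pairwise Lebesgue-null intersections. -/
def ChiralFamily (F : Set (Set (ℝ × ℝ))) : Prop :=
  (∀ E ∈ F, IsMolecule E) ∧ ∀ E ∈ F, ∀ E' ∈ F, E ≠ E' → volume (E ∩ E') = 0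

/-- The eight modulated phases `𝒵_i`, `i = 1, ..., 8`. -/
def Zphase (i : ℕ) : Set (Set (ℝ × ℝ)) :=
  if i ≤ 4 then {E | ∃ n : ℤ × ℤ, E = Rmol n ∧ (n.2 + n.1) % 4 = (i : ℤ) % 4}
  else {E | ∃ n : ℤ × ℤ, E = Smol n ∧ (n.2 - n.1) % 4 = ((i : ℤ) - 4) % 4}

/-- Open axis-parallel square of side `r` centered at `x`. -/
def osq (r : ℝ) (x : ℝ × ℝ) : Set (ℝ × ℝ) :=
  Ioo (x.1 - r / 2) (x.1 + r / 2) ×ˢ Ioo (x.2 - r / 2) (x.2 + r / 2)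

/-- Euclidean norm on the plane. -/
def enr (x : ℝ × ℝ) : ℝ := Real.sqrt (x.1 ^ 2 + x.2 ^ 2)

/-!
Cut the plane into unit cells. Choosing, for every cell of `Q_{2k}(n)`, a molecule of the family
that contains its centre turns the family into a tiling of that window by tetrominoes. The heart
of the argument is local: if two neighbouring cells are covered by molecules of different phases,
then the cells within distance 2 of them cannot be covered without overlaps, a finite fact that
the kernel checks by exhaustive search. Hence the phase is constant on the cells at distance at least 2 from
the boundary of the window, and every molecule meeting `Q_{2k-4}(n)` covers one of those cells.
-/

theorem Int.apply_eq_apply_of_add_one {α : Type*} {f : ℤ → α} {a b : ℤ}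
    (h : ∀ x, a ≤ x → x < b → f x = f (x + 1)) : ∀ x ∈ Icc a b, f x = f a := by
  rintro x ⟨hax, hxb⟩
  induction x, hax using Int.leInduction with
  | base => rfl
  | succ x hax ih => rw [← h x hax (by omega), ih (by omega)]

theorem apply_eq_apply_of_adjacent {α : Type*} {f : ℤ × ℤ → α} {a b : ℤ × ℤ}
    (h : ∀ v ∈ [((1 : ℤ), (0 : ℤ)), (0, 1)], ∀ c ∈ Icc a b, c + v ∈ Icc a b →
      f c = f (c + v)) : ∀ c ∈ Icc a b, f c = f a := by
  obtain ⟨a₁, a₂⟩ := a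
  obtain ⟨b₁, b₂⟩ := b
  rintro ⟨x, y⟩ hc
  simp only [Set.mem_Icc, Prod.mk_le_mk] at hc
  have hrow : f (x, y) = f (x, a₂) :=
    Int.apply_eq_apply_of_add_one (f := fun y => f (x, y)) (b := b₂) (fun y hay hyb => by
      simpa using h (0, 1) (by simp) (x, y) (by simp; omega) (by simp; omega)) y (by simp; omega)
  have hcol : f (x, a₂) = f (a₁, a₂) :=
    Int.apply_eq_apply_of_add_one (f := fun x => f (x, a₂)) (b := b₁) (fun x hax hxb => by
      simpa using h (1, 0) (by simp) (x, a₂) (by simp; omega) (by simp; omega)) x (by simp; omega)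
  exact hrow.trans hcol

-- `(false, n)` encodes `R(n)` and `(true, n)` encodes `S(n)`; `shape` lists the lower-left
-- corners of the unit cells of `R` and `S`.
abbrev Mol := Bool × ℤ × ℤ

namespace Mol

def shape : Bool → List (ℤ × ℤ)
  | false => [(0, 0), (0, 1), (0, 2), (1, 2)]
  | true => [(-1, 0), (-1, 1), (-1, 2), (-2, 2)]

def cells (m : Mol) : List (ℤ × ℤ) := (shape m.1).map (m.2 + ·)

def shift (p : ℤ × ℤ) (m : Mol) : Mol := (m.1, m.2 + p)

def phase (m : Mol) : ℕ :=
  if m.1 then 4 + ((m.2.2 - m.2.1 - 1) % 4 + 1).toNat else ((m.2.2 + m.2.1 - 1) % 4 + 1).toNat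

theorem mem_cells {m : Mol} {x : ℤ × ℤ} : x ∈ m.cells ↔ x - m.2 ∈ shape m.1 := by
  simp only [cells, List.mem_map]
  constructor
  · rintro ⟨s, hs, rfl⟩
    simpa using hs
  · exact fun h => ⟨x - m.2, h, add_sub_cancel _ _⟩

theorem mem_shift_cells {m : Mol} {p x : ℤ × ℤ} : x ∈ (m.shift p).cells ↔ x - p ∈ m.cells := by
  simp only [mem_cells, shift, sub_add_eq_sub_sub_swap]

theorem shift_shift_neg (p : ℤ × ℤ) (m : Mol) : (m.shift (-p)).shift p = m := by
  simp [shift]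

theorem one_le_phase (m : Mol) : 1 ≤ m.phase := by
  simp only [phase]
  split <;> omega

theorem phase_le_eight (m : Mol) : m.phase ≤ 8 := by
  simp only [phase]
  split <;> omega

theorem phase_shift_eq_of_phase_eq {e e' : Mol} (h : e.phase = e'.phase) (p : ℤ × ℤ) :
    (e.shift p).phase = (e'.shift p).phase := by
  obtain ⟨b, x, y⟩ := e
  obtain ⟨b', x', y'⟩ := e'
  cases b <;> cases b' <;> simp [phase, shift] at h ⊢ <;> omega

end Mol

def coveringMols (d : ℤ × ℤ) : List Mol :=
  [false, true].flatMap fun b => (Mol.shape b).map fun s => (b, d - s)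

theorem mem_coveringMols {d : ℤ × ℤ} {m : Mol} : m ∈ coveringMols d ↔ d ∈ m.cells := by
  rw [Mol.mem_cells]
  obtain ⟨b, n⟩ := m
  simp only [coveringMols, List.mem_flatMap, List.mem_map, Prod.mk.injEq]
  constructor
  · rintro ⟨b, -, s, hs, rfl, rfl⟩
    simpa using hs
  · exact fun h => ⟨b, by cases b <;> simp, d - n, h, rfl, sub_sub_cancel d n⟩

def Covered (occ : List Mol) (d : ℤ × ℤ) : Prop := ∃ m ∈ occ, d ∈ m.cells

instance (occ : List Mol) (d : ℤ × ℤ) : Decidable (Covered occ d) :=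
  inferInstanceAs (Decidable (∃ m ∈ occ, d ∈ m.cells))

def Fits (occ : List Mol) (g : Mol) : Prop := ∀ x ∈ g.cells, ¬ Covered occ x

instance (occ : List Mol) (g : Mol) : Decidable (Fits occ g) :=
  inferInstanceAs (Decidable (∀ x ∈ g.cells, ¬ Covered occ x))

-- `refutes D fuel occ = true` certifies that the cells of `D` cannot be covered by molecules
-- disjoint from each other and from those in `occ`; the search branches over the molecules
-- covering the first uncovered cell of `D`.
def refutes (D : List (ℤ × ℤ)) : ℕ → List Mol → Bool
  | 0, _ => false
  | fuel + 1, occ =>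
    match D.find? fun d => !decide (Covered occ d) with
    | none => false
    | some d => (coveringMols d).all fun g => !decide (Fits occ g) || refutes D fuel (g :: occ)

def intRange (a b : ℤ) : List ℤ := (List.range (b - a + 1).toNat).map fun i : ℕ => a + i

theorem mem_intRange {a b x : ℤ} : x ∈ intRange a b ↔ a ≤ x ∧ x ≤ b := by
  simp only [intRange, List.mem_map, List.mem_range]
  constructor
  · rintro ⟨i, hi, rfl⟩
    omega
  · exact fun h => ⟨(x - a).toNat, by omega, by omega⟩

def box (a b : ℤ × ℤ) : List (ℤ × ℤ) := intRange a.1 b.1 ×ˢ intRange a.2 b.2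

theorem mem_box {a b d : ℤ × ℤ} : d ∈ box a b ↔ d ∈ Icc a b := by
  obtain ⟨x, y⟩ := d
  simp only [box, List.mem_product, mem_intRange, Set.mem_Icc, Prod.le_def]
  tauto

-- The cells within distance 2 of `0` or `v`, nearest first: this order keeps the search small.
def searchRegion (v : ℤ × ℤ) : List (ℤ × ℤ) :=
  (List.range 4).flatMap fun r => (box (-(2, 2)) (v + (2, 2))).filter fun d => max |d.1| |d.2| = r

theorem mem_searchRegion {v d : ℤ × ℤ} (h : d ∈ searchRegion v) :
    d ∈ Icc (-(2, 2)) (v + (2, 2)) := by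
  simp only [searchRegion, List.mem_flatMap, List.mem_filter] at h
  obtain ⟨_, _, hd, _⟩ := h
  exact mem_box.mp hd

theorem refutes_of_adjacent_phase_ne :
    ∀ v ∈ [((1 : ℤ), (0 : ℤ)), (0, 1)], ∀ e ∈ coveringMols 0, ∀ e' ∈ coveringMols v,
      Fits [e] e' → e.phase ≠ e'.phase →
      refutes (searchRegion v) 30 [e, e'] = true := by
  decide +kernel

structure IsCellTiling (W : Set (ℤ × ℤ)) (T : ℤ × ℤ → Mol) : Prop where
  mem_cells : ∀ c ∈ W, c ∈ (T c).cells
  eq_or_disjoint : ∀ c ∈ W, ∀ c' ∈ W, T c = T c' ∨ (T c).cells.Disjoint (T c').cells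

namespace IsCellTiling

variable {W : Set (ℤ × ℤ)} {T : ℤ × ℤ → Mol}

theorem translate (hT : IsCellTiling W T) (p : ℤ × ℤ) :
    IsCellTiling ((p + ·) ⁻¹' W) fun d => (T (p + d)).shift (-p) where
  mem_cells d hd := by
    simpa [Mol.mem_shift_cells, add_comm] using hT.mem_cells _ hd
  eq_or_disjoint d hd d' hd' := by
    refine (hT.eq_or_disjoint _ hd _ hd').imp (congrArg _) fun h x hx hx' => ?_
    rw [Mol.mem_shift_cells] at hx hx'
    exact h hx hx'

theorem fits_of_not_covered (hT : IsCellTiling W T) {occ : List Mol}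
    (hocc : ∀ m ∈ occ, ∃ c ∈ W, T c = m) {d : ℤ × ℤ} (hd : d ∈ W) (hfree : ¬ Covered occ d) :
    Fits occ (T d) := by
  rintro x hx ⟨m, hm, hxm⟩
  obtain ⟨c, hc, rfl⟩ := hocc m hm
  rcases hT.eq_or_disjoint d hd c hc with heq | hdisj
  · exact hfree ⟨T c, hm, heq ▸ hT.mem_cells d hd⟩
  · exact hdisj hx hxm

theorem refutes_eq_false (hT : IsCellTiling W T) {D : List (ℤ × ℤ)} (hD : ∀ d ∈ D, d ∈ W) :
    ∀ (fuel : ℕ) (occ : List Mol), (∀ m ∈ occ, ∃ c ∈ W, T c = m) → refutes D fuel occ = false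
  | 0, _, _ => rfl
  | fuel + 1, occ, hocc => by
    unfold refutes
    split
    · rfl
    · rename_i d hfind
      have hdD := List.mem_of_find?_eq_some hfind
      have hfree : ¬ Covered occ d := by simpa using List.find?_some hfind
      have hnext := refutes_eq_false hT hD fuel (T d :: occ) (by
        intro m hm
        rcases List.mem_cons.mp hm with rfl | hm
        exacts [⟨d, hD d hdD, rfl⟩, hocc m hm])
      rw [List.all_eq_false]
      refine ⟨T d, mem_coveringMols.mpr (hT.mem_cells d (hD d hdD)), ?_⟩
      simp [hT.fits_of_not_covered hocc (hD d hdD) hfree, hnext]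

theorem phase_eq_of_Icc_subset (hT : IsCellTiling W T) {v : ℤ × ℤ}
    (hv : v ∈ [((1 : ℤ), (0 : ℤ)), (0, 1)]) (hW : Icc (-(2, 2)) (v + (2, 2)) ⊆ W) :
    (T 0).phase = (T v).phase := by
  have hvW : (0 : ℤ × ℤ) ∈ W ∧ v ∈ W := by
    constructor <;> apply hW <;> simp only [List.mem_cons, List.not_mem_nil, or_false] at hv <;>
      rcases hv with rfl | rfl <;> decide
  by_contra hne
  rcases hT.eq_or_disjoint 0 hvW.1 v hvW.2 with heq | hdisj
  · exact hne (congrArg Mol.phase heq)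
  have hfits : Fits [T 0] (T v) :=
    hT.fits_of_not_covered (fun m hm => ⟨0, hvW.1, (List.eq_of_mem_singleton hm).symm⟩) hvW.2
      (by simpa [Covered] using fun h => hdisj h (hT.mem_cells v hvW.2))
  have hrefutes := refutes_of_adjacent_phase_ne v hv
    (T 0) (mem_coveringMols.mpr (hT.mem_cells 0 hvW.1))
    (T v) (mem_coveringMols.mpr (hT.mem_cells v hvW.2)) hfits hne
  rw [hT.refutes_eq_false (fun d hd => hW (mem_searchRegion hd))] at hrefutes
  · exact Bool.false_ne_true hrefutes
  · intro m hm
    rcases List.mem_pair.mp hm with rfl | rfl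
    exacts [⟨0, hvW.1, rfl⟩, ⟨v, hvW.2, rfl⟩]

theorem phase_eq_add (hT : IsCellTiling W T) {v : ℤ × ℤ}
    (hv : v ∈ [((1 : ℤ), (0 : ℤ)), (0, 1)]) {c : ℤ × ℤ}
    (hW : Icc (c - (2, 2)) (c + v + (2, 2)) ⊆ W) : (T c).phase = (T (c + v)).phase := by
  have h := (hT.translate c).phase_eq_of_Icc_subset hv <| by
    rw [← Set.image_subset_iff, Set.image_const_add_Icc]
    rwa [sub_eq_add_neg, add_assoc] at hW
  simpa [Mol.shift_shift_neg] using Mol.phase_shift_eq_of_phase_eq h c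

theorem phase_eq_of_mem_Icc {a b : ℤ × ℤ} (hT : IsCellTiling (Icc a b) T) :
    ∀ c ∈ Icc (a + (2, 2)) (b - (2, 2)), (T c).phase = (T (a + (2, 2))).phase :=
  apply_eq_apply_of_adjacent fun v hv c hc hcv => hT.phase_eq_add hv <| Icc_subset_Icc
    (by simpa [le_sub_iff_add_le] using hc.1) (by simpa [le_sub_iff_add_le] using hcv.2)

end IsCellTiling

def unitSquare (c : ℤ × ℤ) : Set (ℝ × ℝ) := Icc (c.1 : ℝ) (c.1 + 1) ×ˢ Icc (c.2 : ℝ) (c.2 + 1)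

def cellCenter (c : ℤ × ℤ) : ℝ × ℝ := (c.1 + 1 / 2, c.2 + 1 / 2)

def Mol.toSet (m : Mol) : Set (ℝ × ℝ) := if m.1 then Smol m.2 else Rmol m.2

theorem Icc_zero_three_eq : Icc (0 : ℝ) 3 = Icc 0 1 ∪ Icc 1 2 ∪ Icc 2 3 := by
  rw [Icc_union_Icc_eq_Icc, Icc_union_Icc_eq_Icc] <;> norm_num

theorem mem_Rbase {w : ℝ × ℝ} : w ∈ Rbase ↔ ∃ s ∈ Mol.shape false, w ∈ unitSquare s := by
  simp only [Rbase, Icc_zero_three_eq, prod_union, mem_union, Mol.shape, List.mem_cons,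
    List.not_mem_nil, or_false, exists_eq_or_imp, exists_eq_left, unitSquare]
  norm_num [or_assoc]

theorem mem_Sbase {w : ℝ × ℝ} : w ∈ Sbase ↔ ∃ s ∈ Mol.shape true, w ∈ unitSquare s := by
  simp only [Sbase, Icc_zero_three_eq, prod_union, mem_union, Mol.shape, List.mem_cons,
    List.not_mem_nil, or_false, exists_eq_or_imp, exists_eq_left, unitSquare]
  norm_num [or_assoc]

theorem mem_trSet {v z : ℝ × ℝ} {A : Set (ℝ × ℝ)} :
    z ∈ trSet v A ↔ (z.1 - v.1, z.2 - v.2) ∈ A := by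
  constructor
  · rintro ⟨w, hw, rfl⟩
    simpa using hw
  · exact fun h => ⟨_, h, by simp⟩

theorem mem_unitSquare_add {n s : ℤ × ℤ} {z : ℝ × ℝ} :
    z ∈ unitSquare (n + s) ↔ (z.1 - n.1, z.2 - n.2) ∈ unitSquare s := by
  simp only [unitSquare, mem_prod, mem_Icc, Prod.fst_add, Prod.snd_add, Int.cast_add]
  constructor <;> rintro ⟨⟨_, _⟩, _, _⟩ <;> refine ⟨⟨?_, ?_⟩, ?_, ?_⟩ <;> linarith

theorem Mol.mem_toSet {m : Mol} {z : ℝ × ℝ} :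
    z ∈ m.toSet ↔ ∃ c ∈ m.cells, z ∈ unitSquare c := by
  obtain ⟨b, n⟩ := m
  simp only [cells, List.mem_map, exists_exists_and_eq_and, mem_unitSquare_add]
  cases b
  exacts [mem_trSet.trans mem_Rbase, mem_trSet.trans mem_Sbase]

theorem eq_of_cellCenter_mem_unitSquare {c c' : ℤ × ℤ} (h : cellCenter c ∈ unitSquare c') :
    c' = c := by
  obtain ⟨⟨h₁, h₂⟩, h₃, h₄⟩ := h
  simp only [cellCenter] at h₁ h₂ h₃ h₄
  have e₁ : c'.1 < c.1 + 1 := by exact_mod_cast (show (c'.1 : ℝ) < c.1 + 1 by linarith)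
  have e₂ : c.1 < c'.1 + 1 := by exact_mod_cast (show (c.1 : ℝ) < c'.1 + 1 by linarith)
  have e₃ : c'.2 < c.2 + 1 := by exact_mod_cast (show (c'.2 : ℝ) < c.2 + 1 by linarith)
  have e₄ : c.2 < c'.2 + 1 := by exact_mod_cast (show (c.2 : ℝ) < c'.2 + 1 by linarith)
  exact Prod.ext (by omega) (by omega)

theorem Mol.mem_cells_of_cellCenter_mem {m : Mol} {c : ℤ × ℤ} (h : cellCenter c ∈ m.toSet) :
    c ∈ m.cells := by
  obtain ⟨c', hc', hcc'⟩ := mem_toSet.mp h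
  rwa [← eq_of_cellCenter_mem_unitSquare hcc']

theorem Mol.unitSquare_subset_toSet {m : Mol} {c : ℤ × ℤ} (h : c ∈ m.cells) :
    unitSquare c ⊆ m.toSet :=
  fun _ hz => mem_toSet.mpr ⟨c, h, hz⟩

theorem volume_unitSquare (c : ℤ × ℤ) : volume (unitSquare c) = 1 := by
  rw [unitSquare, Measure.volume_eq_prod, Measure.prod_prod, Real.volume_Icc, Real.volume_Icc]
  norm_num

theorem IsMolecule.exists_eq_toSet {E : Set (ℝ × ℝ)} (h : IsMolecule E) :
    ∃ m : Mol, E = m.toSet := by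
  obtain ⟨n, rfl | rfl⟩ := h
  exacts [⟨(false, n), rfl⟩, ⟨(true, n), rfl⟩]

theorem Mol.toSet_mem_Zphase (m : Mol) : m.toSet ∈ Zphase m.phase := by
  obtain ⟨_ | _, n⟩ := m
  · have h : phase (false, n) ≤ 4 := by simp [phase]; omega
    simp only [Zphase, if_pos h]
    exact ⟨n, rfl, by simp [phase]; omega⟩
  · have h : ¬ phase (true, n) ≤ 4 := by simp [phase]; omega
    simp only [Zphase, if_neg h]
    exact ⟨n, rfl, by simp [phase]; omega⟩

namespace ChiralFamily

variable {F : Set (Set (ℝ × ℝ))}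

theorem eq_of_unitSquare_subset (hF : ChiralFamily F) {E E' : Set (ℝ × ℝ)} (hE : E ∈ F)
    (hE' : E' ∈ F) {c : ℤ × ℤ} (h : unitSquare c ⊆ E ∩ E') : E = E' := by
  by_contra hne
  have := measure_mono (μ := volume) h
  rw [volume_unitSquare, hF.2 E hE E' hE' hne] at this
  exact one_ne_zero (nonpos_iff_eq_zero.mp this)

theorem exists_isCellTiling (hF : ChiralFamily F) {W : Set (ℤ × ℤ)}
    (hW : ∀ c ∈ W, cellCenter c ∈ ⋃₀ F) :
    ∃ T : ℤ × ℤ → Mol, IsCellTiling W T ∧ ∀ c ∈ W, (T c).toSet ∈ F := by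
  choose! mol hmol using fun E (hE : E ∈ F) => (hF.1 E hE).exists_eq_toSet
  choose! E hEF hcE using fun c (hc : c ∈ W) => mem_sUnion.mp (hW c hc)
  refine ⟨fun c => mol (E c), ⟨fun c hc => ?_, fun c hc c' hc' => ?_⟩,
    fun c hc => hmol _ (hEF c hc) ▸ hEF c hc⟩
  · exact Mol.mem_cells_of_cellCenter_mem (hmol _ (hEF c hc) ▸ hcE c hc)
  · by_cases h : E c = E c'
    · exact .inl (congrArg mol h)
    · refine .inr fun x hx hx' =>
        h <| hF.eq_of_unitSquare_subset (hEF c hc) (hEF c' hc') (c := x) ?_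
      rw [hmol _ (hEF c hc), hmol _ (hEF c' hc')]
      exact subset_inter (Mol.unitSquare_subset_toSet hx) (Mol.unitSquare_subset_toSet hx')

end ChiralFamily

theorem cellCenter_mem_osq {n : ℤ × ℤ} {k : ℤ} {c : ℤ × ℤ}
    (hc : c ∈ Icc (n - (k, k)) (n + (k - 1, k - 1))) :
    cellCenter c ∈ osq (2 * k) (n.1, n.2) := by
  obtain ⟨⟨h₁, h₂⟩, h₃, h₄⟩ := hc
  simp only [Prod.fst_sub, Prod.snd_sub, Prod.fst_add, Prod.snd_add] at h₁ h₂ h₃ h₄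
  have e₁ : (n.1 : ℝ) - k ≤ c.1 := by exact_mod_cast h₁
  have e₂ : (n.2 : ℝ) - k ≤ c.2 := by exact_mod_cast h₂
  have e₃ : (c.1 : ℝ) ≤ n.1 + (k - 1) := by exact_mod_cast h₃
  have e₄ : (c.2 : ℝ) ≤ n.2 + (k - 1) := by exact_mod_cast h₄
  simp only [osq, cellCenter, mem_prod, mem_Ioo]
  refine ⟨⟨?_, ?_⟩, ?_, ?_⟩ <;> linarith

theorem mem_Icc_of_mem_unitSquare_osq {n : ℤ × ℤ} {k : ℤ} {c : ℤ × ℤ} {z : ℝ × ℝ}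
    (hz : z ∈ unitSquare c) (hq : z ∈ osq (2 * k - 4) (n.1, n.2)) :
    c ∈ Icc (n - (k, k) + (2, 2)) (n + (k - 1, k - 1) - (2, 2)) := by
  obtain ⟨⟨h₁, h₂⟩, h₃, h₄⟩ := hz
  simp only [osq, mem_prod, mem_Ioo] at hq
  obtain ⟨⟨q₁, q₂⟩, q₃, q₄⟩ := hq
  have e₁ : n.1 - k + 1 < c.1 := by exact_mod_cast (show (n.1 : ℝ) - k + 1 < c.1 by linarith)
  have e₂ : n.2 - k + 1 < c.2 := by exact_mod_cast (show (n.2 : ℝ) - k + 1 < c.2 by linarith)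
  have e₃ : c.1 < n.1 + k - 2 := by exact_mod_cast (show (c.1 : ℝ) < n.1 + k - 2 by linarith)
  have e₄ : c.2 < n.2 + k - 2 := by exact_mod_cast (show (c.2 : ℝ) < n.2 + k - 2 by linarith)
  simp only [mem_Icc, Prod.le_def, Prod.fst_sub, Prod.snd_sub, Prod.fst_add, Prod.snd_add]
  omega

theorem stmt1_general (F : Set (Set (ℝ × ℝ))) (hF : ChiralFamily F)
    (n : ℤ × ℤ) (k : ℕ)
    (hcov : osq (2 * k) ((n.1 : ℝ), (n.2 : ℝ)) ⊆ ⋃₀ F) :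
    ∃ i : ℕ, 1 ≤ i ∧ i ≤ 8 ∧
      ∀ E ∈ F, (E ∩ osq (2 * k - 4) ((n.1 : ℝ), (n.2 : ℝ))).Nonempty → E ∈ Zphase i := by
  set W := Icc (n - ((k : ℤ), (k : ℤ))) (n + ((k : ℤ) - 1, (k : ℤ) - 1))
  obtain ⟨T, hT, hTF⟩ := hF.exists_isCellTiling (W := W) fun c hc => hcov <| by
    exact_mod_cast cellCenter_mem_osq hc
  set c₀ := n - ((k : ℤ), (k : ℤ)) + (2, 2)
  refine ⟨(T c₀).phase, Mol.one_le_phase _, Mol.phase_le_eight _, ?_⟩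
  rintro E hE ⟨z, hzE, hzQ⟩
  obtain ⟨m, rfl⟩ := (hF.1 E hE).exists_eq_toSet
  obtain ⟨c, hcm, hzc⟩ := Mol.mem_toSet.mp hzE
  have hc := mem_Icc_of_mem_unitSquare_osq hzc (k := k) (by exact_mod_cast hzQ)
  have hcW : c ∈ W := Icc_subset_Icc (le_add_of_nonneg_right (by decide))
    (sub_le_self _ (by decide)) hc
  rw [hF.eq_of_unitSquare_subset hE (hTF c hcW) (subset_inter (Mol.unitSquare_subset_toSet hcm)
    (Mol.unitSquare_subset_toSet (hT.mem_cells c hcW))), ← hT.phase_eq_of_mem_Icc c hc]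
  exact (T c).toSet_mem_Zphase

/-- if a chiral family covers the square `Q_{2k}(n)`, `k ≥ 4`, then all
its molecules meeting `Q_{2k-4}(n)` belong to a single modulated phase `𝒵_i`. -/
theorem stmt1 (F : Set (Set (ℝ × ℝ))) (hF : ChiralFamily F)
    (n : ℤ × ℤ) (k : ℕ) (hk : 4 ≤ k)
    (hcov : osq (2 * k) ((n.1 : ℝ), (n.2 : ℝ)) ⊆ ⋃₀ F) :
    ∃ i : ℕ, 1 ≤ i ∧ i ≤ 8 ∧
      ∀ E ∈ F, (E ∩ osq (2 * k - 4) ((n.1 : ℝ), (n.2 : ℝ))).Nonempty → E ∈ Zphase i :=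
  stmt1_general F hF n k hcov
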